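/- Let A ∈ ℝ^{V×W}, b ∈ ℝ^V, c ∈ ℝ^W, and let (𝒫, 𝒬) be an equitable partition of A with b constant on classes of 𝒫 and c constant on classes of 𝒬. Let C = Π_𝒫, D = Π_𝒬, A' = CˢAD, b' = Cˢb, c' = Dᵗc. If x' ∈ ℝ^𝒬 is feasible for the LP max (c')ᵗx' s.t. A'x' ≤ b', then x = Dx' is feasible for max cᵗx s.t. Ax ≤ b, and optimality is preserved in both directions via the maps x ↦ Dˢx and x' ↦ Dx'. -/

import Mathlib

/-!
Both LPs are compared through the averaging operator `D * Dˢ`, which is symmetric and fixes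
every vector that is constant on the classes of `D`. Equitability says that the columns of `A * D`
are constant on the classes of `C` and the rows of `Cᵀ * A` on those of `D`; hence
`A * D * x' = C * (Cˢ * A * D * x')` and `Cˢ * A * D * Dˢ * x = Cˢ * A * x`. Since `C` and `Cˢ`
have nonnegative entries, these identities carry feasibility back and forth, and `c' = Dᵀ * c`
together with the symmetry of `D * Dˢ` makes both maps preserve the objective. Optimality is then
transferred as for any pair of feasibility- and objective-preserving maps.
-/

open Finset Matrix
open scoped Classical

/-- A partition matrix: a 0–1 matrix with exactly one 1 in each row and at least one 1 in
each column. -/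
def PartitionMatrix {V T : Type*} [Fintype V] [Fintype T] (P : Matrix V T ℝ) : Prop :=
  (∀ v t, P v t = 0 ∨ P v t = 1) ∧ (∀ v, ∃! t, P v t = 1) ∧ (∀ t, ∃ v, P v t = 1)

/-- The scaled transpose `Πˢ` of a partition matrix: `Πˢ t v = Π v t / ∑_{v'} Π v' t`. -/
noncomputable def scaledT {V T : Type*} [Fintype V] (P : Matrix V T ℝ) : Matrix T V ℝ :=
  Matrix.of fun t v => P v t / ∑ v', P v' t

/-- Feasibility for the dual-form LP `max cᵗx s.t. Ax ≤ b` (componentwise inequality). -/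
def DualFeasible {V W : Type*} [Fintype V] [Fintype W]
    (A : Matrix V W ℝ) (b : V → ℝ) (x : W → ℝ) : Prop :=
  ∀ v, (A *ᵥ x) v ≤ b v

/-- Optimality for the dual-form LP `max cᵗx s.t. Ax ≤ b`. -/
def DualOptimal {V W : Type*} [Fintype V] [Fintype W]
    (A : Matrix V W ℝ) (b : V → ℝ) (c : W → ℝ) (x : W → ℝ) : Prop :=
  DualFeasible A b x ∧ ∀ y : W → ℝ, DualFeasible A b y → c ⬝ᵥ y ≤ c ⬝ᵥ x

lemma Matrix.mulVec_mono_of_nonneg {m n : Type*} [Fintype n] {M : Matrix m n ℝ}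
    (hM : ∀ i j, 0 ≤ M i j) {x y : n → ℝ} (hxy : x ≤ y) : M *ᵥ x ≤ M *ᵥ y :=
  fun i => Finset.sum_le_sum fun j _ => mul_le_mul_of_nonneg_left (hxy j) (hM i j)

lemma Matrix.isSymm_mul_scaledT {V T : Type*} [Fintype V] [Fintype T] (P : Matrix V T ℝ) :
    (P * scaledT P).IsSymm :=
  IsSymm.ext fun v v' => Finset.sum_congr rfl fun t _ => by
    simp only [scaledT, of_apply]
    ring

lemma dualOptimal_of_transfer {V W V' W' : Type*} [Fintype V] [Fintype W] [Fintype V']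
    [Fintype W'] {A : Matrix V W ℝ} {b : V → ℝ} {c : W → ℝ} {A' : Matrix V' W' ℝ}
    {b' : V' → ℝ} {c' : W' → ℝ} (f : (W → ℝ) → W' → ℝ) (g : (W' → ℝ) → W → ℝ)
    (hf : ∀ x, DualFeasible A b x → DualFeasible A' b' (f x))
    (hg : ∀ y, DualFeasible A' b' y → DualFeasible A b (g y))
    (hfc : ∀ x, c' ⬝ᵥ f x = c ⬝ᵥ x) (hgc : ∀ y, c ⬝ᵥ g y = c' ⬝ᵥ y)
    {x : W → ℝ} (hx : DualOptimal A b c x) : DualOptimal A' b' c' (f x) :=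
  ⟨hf x hx.1, fun y hy => by
    rw [hfc, ← hgc]
    exact hx.2 _ (hg y hy)⟩

def ConstantOnClasses {V T : Type*} (P : Matrix V T ℝ) (b : V → ℝ) : Prop :=
  ∀ t v v', P v t = 1 → P v' t = 1 → b v = b v'

lemma ConstantOnClasses.mulVec {V W T : Type*} [Fintype W] {P : Matrix V T ℝ}
    {M : Matrix V W ℝ} (hM : ∀ w, ConstantOnClasses P fun v => M v w) (x : W → ℝ) :
    ConstantOnClasses P (M *ᵥ x) := fun t v v' hv hv' =>
  Finset.sum_congr rfl fun w _ => by rw [hM w t v v' hv hv']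

namespace PartitionMatrix

variable {V T : Type*} [Fintype V] [Fintype T] {P : Matrix V T ℝ}

lemma nonneg (hP : PartitionMatrix P) (v : V) (t : T) : 0 ≤ P v t := by
  rcases hP.1 v t with h | h <;> simp [h]

lemma eq_zero_of_ne (hP : PartitionMatrix P) {v : V} {t t' : T} (hvt : P v t = 1)
    (ht' : t' ≠ t) : P v t' = 0 :=
  (hP.1 v t').resolve_right fun h => ht' ((hP.2.1 v).unique h hvt)

lemma sum_col_pos (hP : PartitionMatrix P) (t : T) : 0 < ∑ v, P v t := by
  obtain ⟨v, hv⟩ := hP.2.2 t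
  exact lt_of_lt_of_le (by simp [hv]) (Finset.single_le_sum (fun v _ => hP.nonneg v t)
    (Finset.mem_univ v))

lemma scaledT_nonneg (hP : PartitionMatrix P) (t : T) (v : V) : 0 ≤ scaledT P t v :=
  div_nonneg (hP.nonneg v t) (hP.sum_col_pos t).le

lemma mulVec_apply_of_eq_one (hP : PartitionMatrix P) {v : V} {t : T} (hvt : P v t = 1)
    (y : T → ℝ) : (P *ᵥ y) v = y t := by
  rw [mulVec, dotProduct, Finset.sum_eq_single t
    (fun t' _ ht' => by rw [hP.eq_zero_of_ne hvt ht', zero_mul]) (by simp), hvt, one_mul]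

lemma sum_filter_eq_one (hP : PartitionMatrix P) (t : T) (f : V → ℝ) :
    ∑ v ∈ univ.filter (fun v => P v t = 1), f v = ∑ v, P v t * f v := by
  rw [Finset.sum_filter]
  refine Finset.sum_congr rfl fun v _ => ?_
  rcases hP.1 v t with h | h <;> simp [h]

lemma mulVec_scaledT_mulVec (hP : PartitionMatrix P) {b : V → ℝ}
    (hb : ConstantOnClasses P b) : P *ᵥ (scaledT P *ᵥ b) = b := by
  funext v
  obtain ⟨t, hvt, -⟩ := hP.2.1 v
  have hclass : ∀ v', P v' t * b v' = P v' t * b v := fun v' => by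
    rcases hP.1 v' t with h | h
    · simp [h]
    · rw [hb t v' v h hvt]
  rw [hP.mulVec_apply_of_eq_one hvt]
  simp only [mulVec, dotProduct, scaledT, of_apply, div_mul_eq_mul_div, ← Finset.sum_div,
    hclass, ← Finset.sum_mul]
  exact mul_div_cancel_left₀ _ (hP.sum_col_pos t).ne'

lemma dotProduct_mulVec_scaledT_mulVec (hP : PartitionMatrix P) {c : V → ℝ}
    (hc : ConstantOnClasses P c) (x : V → ℝ) : c ⬝ᵥ (P *ᵥ (scaledT P *ᵥ x)) = c ⬝ᵥ x := by
  rw [mulVec_mulVec, dotProduct_mulVec, ← mulVec_transpose, (isSymm_mul_scaledT P).eq,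
    ← mulVec_mulVec, hP.mulVec_scaledT_mulVec hc]

end PartitionMatrix

def IsRowEquitable {V W Pt Qt : Type*} [Fintype W] (C : Matrix V Pt ℝ) (D : Matrix W Qt ℝ)
    (A : Matrix V W ℝ) : Prop :=
  ∀ (p : Pt) (q : Qt) (v v' : V), C v p = 1 → C v' p = 1 →
    ∑ w ∈ univ.filter (fun w => D w q = 1), A v w =
    ∑ w ∈ univ.filter (fun w => D w q = 1), A v' w

def IsColEquitable {V W Pt Qt : Type*} [Fintype V] (C : Matrix V Pt ℝ) (D : Matrix W Qt ℝ)
    (A : Matrix V W ℝ) : Prop :=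
  ∀ (p : Pt) (q : Qt) (w w' : W), D w q = 1 → D w' q = 1 →
    ∑ v ∈ univ.filter (fun v => C v p = 1), A v w =
    ∑ v ∈ univ.filter (fun v => C v p = 1), A v w'

section Equitable

variable {V W Pt Qt : Type*} [Fintype V] [Fintype W] [Fintype Pt] [Fintype Qt]
  {A : Matrix V W ℝ} {C : Matrix V Pt ℝ} {D : Matrix W Qt ℝ}

lemma IsRowEquitable.mulVec_mulVec_eq (hC : PartitionMatrix C) (hD : PartitionMatrix D)
    (hrow : IsRowEquitable C D A) (x' : Qt → ℝ) :
    A *ᵥ (D *ᵥ x') = C *ᵥ ((scaledT C * A * D) *ᵥ x') := by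
  have hcols : ∀ q, ConstantOnClasses C fun v => (A * D) v q := fun q p v v' hv hv' => by
    have := hrow p q v v' hv hv'
    rw [hD.sum_filter_eq_one, hD.sum_filter_eq_one] at this
    simpa only [mul_apply, mul_comm] using this
  rw [Matrix.mul_assoc, ← mulVec_mulVec (M := scaledT C),
    hC.mulVec_scaledT_mulVec (ConstantOnClasses.mulVec hcols x'), mulVec_mulVec]

lemma IsColEquitable.mulVec_scaledT_mulVec (hC : PartitionMatrix C) (hD : PartitionMatrix D)
    (hcol : IsColEquitable C D A) (x : W → ℝ) :
    (scaledT C * A * D) *ᵥ (scaledT D *ᵥ x) = scaledT C *ᵥ (A *ᵥ x) := by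
  have hrows : ∀ p, ConstantOnClasses D fun w => (scaledT C * A) p w :=
    fun p q w w' hw hw' => by
      have := hcol p q w w' hw hw'
      rw [hC.sum_filter_eq_one, hC.sum_filter_eq_one] at this
      simp only [mul_apply, scaledT, of_apply, div_mul_eq_mul_div, ← Finset.sum_div, this]
  rw [← mulVec_mulVec, mulVec_mulVec (M := scaledT C)]
  funext p
  exact hD.dotProduct_mulVec_scaledT_mulVec (hrows p) x

lemma IsRowEquitable.dualFeasible_mulVec (hC : PartitionMatrix C) (hD : PartitionMatrix D)
    (hrow : IsRowEquitable C D A) {b : V → ℝ} (hb : ConstantOnClasses C b) {x' : Qt → ℝ}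
    (hx' : DualFeasible (scaledT C * A * D) (scaledT C *ᵥ b) x') :
    DualFeasible A b (D *ᵥ x') := by
  have := mulVec_mono_of_nonneg hC.nonneg (show _ *ᵥ x' ≤ _ from hx')
  rwa [hC.mulVec_scaledT_mulVec hb, ← hrow.mulVec_mulVec_eq hC hD] at this

lemma IsColEquitable.dualFeasible_scaledT_mulVec (hC : PartitionMatrix C)
    (hD : PartitionMatrix D) (hcol : IsColEquitable C D A) {b : V → ℝ} {x : W → ℝ}
    (hx : DualFeasible A b x) :
    DualFeasible (scaledT C * A * D) (scaledT C *ᵥ b) (scaledT D *ᵥ x) := by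
  show _ *ᵥ (scaledT D *ᵥ x) ≤ _
  rw [hcol.mulVec_scaledT_mulVec hC hD]
  exact mulVec_mono_of_nonneg hC.scaledT_nonneg hx

end Equitable

/-- **Reduction Lemma, dual form LPs.** Let `(𝒫, 𝒬)` be an equitable
partition of `A` (partition matrices `C, D`) with `b` constant on classes of `𝒫` and `c`
constant on classes of `𝒬`. Set `A' = CˢAD`, `b' = Cˢb`, `c' = Dᵗc`. If `x'` is feasible
for `max (c')ᵗx' s.t. A'x' ≤ b'` then `Dx'` is feasible for `max cᵗx s.t. Ax ≤ b`, and
optimality is preserved in both directions via `x ↦ Dˢx` and `x' ↦ Dx'`. -/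
theorem reduction_lemma_dual_LP
    {V W Pt Qt : Type*} [Fintype V] [Fintype W] [Fintype Pt] [Fintype Qt]
    (A : Matrix V W ℝ) (b : V → ℝ) (c : W → ℝ)
    (C : Matrix V Pt ℝ) (D : Matrix W Qt ℝ)
    (hC : PartitionMatrix C) (hD : PartitionMatrix D)
    (hrow : ∀ (p : Pt) (q : Qt) (v v' : V), C v p = 1 → C v' p = 1 →
      ∑ w ∈ univ.filter (fun w => D w q = 1), A v w =
      ∑ w ∈ univ.filter (fun w => D w q = 1), A v' w)
    (hcol : ∀ (p : Pt) (q : Qt) (w w' : W), D w q = 1 → D w' q = 1 →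
      ∑ v ∈ univ.filter (fun v => C v p = 1), A v w =
      ∑ v ∈ univ.filter (fun v => C v p = 1), A v w')
    (hb : ∀ (p : Pt) (v v' : V), C v p = 1 → C v' p = 1 → b v = b v')
    (hc : ∀ (q : Qt) (w w' : W), D w q = 1 → D w' q = 1 → c w = c w') :
    (∀ x' : Qt → ℝ, DualFeasible (scaledT C * A * D) (scaledT C *ᵥ b) x' →
      DualFeasible A b (D *ᵥ x')) ∧
    (∀ x : W → ℝ, DualOptimal A b c x →
      DualOptimal (scaledT C * A * D) (scaledT C *ᵥ b) (Dᵀ *ᵥ c) (scaledT D *ᵥ x)) ∧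
    (∀ x' : Qt → ℝ, DualOptimal (scaledT C * A * D) (scaledT C *ᵥ b) (Dᵀ *ᵥ c) x' →
      DualOptimal A b c (D *ᵥ x')) := by
  have hprimal : ∀ x', DualFeasible (scaledT C * A * D) (scaledT C *ᵥ b) x' →
      DualFeasible A b (D *ᵥ x') := fun _ => IsRowEquitable.dualFeasible_mulVec hC hD hrow hb
  have hreduced : ∀ x, DualFeasible A b x →
      DualFeasible (scaledT C * A * D) (scaledT C *ᵥ b) (scaledT D *ᵥ x) :=
    fun _ => IsColEquitable.dualFeasible_scaledT_mulVec hC hD hcol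
  have hobj_primal : ∀ x', c ⬝ᵥ (D *ᵥ x') = (Dᵀ *ᵥ c) ⬝ᵥ x' := fun x' => by
    rw [dotProduct_mulVec, mulVec_transpose]
  have hobj_reduced : ∀ x, (Dᵀ *ᵥ c) ⬝ᵥ (scaledT D *ᵥ x) = c ⬝ᵥ x := fun x => by
    rw [← hobj_primal, hD.dotProduct_mulVec_scaledT_mulVec hc]
  exact ⟨hprimal,
    fun _ => dualOptimal_of_transfer _ _ hreduced hprimal hobj_reduced hobj_primal,
    fun _ => dualOptimal_of_transfer _ _ hprimal hreduced hobj_primal hobj_reduced⟩
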